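/- arXiv:2402.05844 — 3 statements merged into one kernel-verified Lean document; each statement's English description precedes it below -/
import Mathlib

section
/- Under strong ignorability and positivity, the outcome regressions coincide almost surely with the conditional means of the potential outcomes: μ¹ = E[Y¹ | 𝔪] P-a.s. and μ⁰ = E[Y⁰ | 𝔪] P-a.s. -/
open MeasureTheory ProbabilityTheory Filter

/-- Truncation of a real number to `[-n, n]`. -/
noncomputable def tr (n : ℕ) (x : ℝ) : ℝ := max (min x n) (-(n : ℝ))

lemma tr_abs_le_abs (n : ℕ) (x : ℝ) : |tr n x| ≤ |x| := by
  unfold tr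
  rcases le_or_gt 0 x with hx | hx
  · rw [abs_of_nonneg hx, abs_of_nonneg]
    · exact max_le (min_le_left _ _) (le_trans (neg_nonpos.2 (by positivity)) hx)
    · exact le_max_of_le_left (le_min hx (by positivity))
  · rw [abs_of_neg hx, abs_of_nonpos, neg_le_neg_iff]
    · rw [min_eq_left (le_trans hx.le (by positivity))]
      exact le_max_left _ _
    · rw [min_eq_left (le_trans hx.le (by positivity))]
      exact max_le hx.le (neg_nonpos.2 (by positivity))

lemma tr_abs_le (n : ℕ) (x : ℝ) : |tr n x| ≤ n := by
  unfold tr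
  rw [abs_le]
  constructor
  · exact le_max_right _ _
  · exact max_le (le_trans (min_le_right _ _) le_rfl) (le_trans (neg_nonpos.2 (by positivity)) (by positivity))

lemma tr_eq_self (n : ℕ) (x : ℝ) (h : |x| ≤ n) : tr n x = x := by
  rw [abs_le] at h
  unfold tr
  rw [min_eq_left h.2, max_eq_left h.1]

lemma measurable_tr (n : ℕ) : Measurable (tr n) :=
  (measurable_id.min measurable_const).max measurable_const

lemma tendsto_tr (x : ℝ) : Tendsto (fun n : ℕ => tr n x) atTop (nhds x) := by
  apply tendsto_atTop_of_eventually_const (i₀ := ⌈|x|⌉₊)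
  intro n hn
  exact tr_eq_self n x (le_trans (Nat.le_ceil _) (by exact_mod_cast hn))

/-- Key lemma: if the "ignorability identity" holds for all truncations of `Z`, it
holds for `Z` itself. -/
lemma key {Ω : Type*} (m : MeasurableSpace Ω) {m0 : MeasurableSpace Ω}
    (P : Measure Ω) [IsProbabilityMeasure P]
    (A Z pi : Ω → ℝ)
    (hAbd : ∀ ω, |A ω| ≤ 1) (hAmeas : Measurable[m0] A)
    (hZ : Integrable Z P)
    (hpibd : ∀ᵐ ω ∂P, |pi ω| ≤ 1)
    (hpiae : AEStronglyMeasurable pi P)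
    (htr : ∀ n : ℕ, P[fun ω => A ω * tr n (Z ω)|m] =ᵐ[P]
      fun ω => pi ω * (P[fun ω => tr n (Z ω)|m]) ω) :
    P[fun ω => A ω * Z ω|m] =ᵐ[P] fun ω => pi ω * (P[Z|m]) ω := by
  -- integrability facts
  have hg : ∀ n : ℕ, Integrable (fun ω => tr n (Z ω)) P := fun n =>
    hZ.abs.mono' ((measurable_tr n).comp_aemeasurable hZ.1.aemeasurable).aestronglyMeasurable
      (Eventually.of_forall fun ω => by simpa using tr_abs_le_abs n (Z ω))
  have hAZ : Integrable (fun ω => A ω * Z ω) P :=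
    hZ.bdd_mul (hAmeas.aestronglyMeasurable : AEStronglyMeasurable A P) (c := 1) (Eventually.of_forall fun ω => by simpa using hAbd ω)
  have hAg : ∀ n : ℕ, Integrable (fun ω => A ω * tr n (Z ω)) P := fun n =>
    (hg n).bdd_mul (hAmeas.aestronglyMeasurable : AEStronglyMeasurable A P) (c := 1) (Eventually.of_forall fun ω => by simpa using hAbd ω)
  -- error terms
  set ε : ℕ → ℝ := fun n => ∫ ω, |Z ω - tr n (Z ω)| ∂P with hε
  have hεint : ∀ n, Integrable (fun ω => |Z ω - tr n (Z ω)|) P := fun n =>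
    (hZ.sub (hg n)).abs
  have hεto : Tendsto ε atTop (nhds 0) := by
    have h0 : (0 : ℝ) = ∫ (_ : Ω), (0 : ℝ) ∂P := by simp
    rw [hε, h0]
    apply tendsto_integral_of_dominated_convergence (fun ω => 2 * |Z ω|)
      (fun n => (hεint n).1) (hZ.abs.const_mul 2)
    · intro n
      refine Eventually.of_forall fun ω => ?_
      rw [Real.norm_eq_abs, abs_abs]
      calc |Z ω - tr n (Z ω)| ≤ |Z ω| + |tr n (Z ω)| := abs_sub _ _
        _ ≤ |Z ω| + |Z ω| := by linarith [tr_abs_le_abs n (Z ω)]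
        _ = 2 * |Z ω| := by ring
    · refine Eventually.of_forall fun ω => ?_
      have h1 : Tendsto (fun n : ℕ => Z ω - tr n (Z ω)) atTop (nhds 0) := by
        have := (tendsto_tr (Z ω)).const_sub (Z ω)
        simpa using this
      simpa using h1.abs
  -- the difference function
  set D : Ω → ℝ := fun ω => |(P[fun ω => A ω * Z ω|m]) ω - pi ω * (P[Z|m]) ω| with hD
  have hDint : Integrable D P := by
    apply Integrable.abs
    apply integrable_condExp.sub
    have : Integrable (P[Z|m]) P := integrable_condExp
    exact this.bdd_mul (c := 1) hpiae (by filter_upwards [hpibd] with ω h using h)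
  have hDnonneg : 0 ≤ᵐ[P] D := Eventually.of_forall fun ω => abs_nonneg _
  -- main bound: ∫ D ≤ 2 ε n for each n
  have hbound : ∀ n : ℕ, ∫ ω, D ω ∂P ≤ 2 * ε n := by
    intro n
    -- a.e. pointwise bound
    have hsub1 := condExp_sub (μ := P) (m := m) hAZ (hAg n)
    have hsub2 := condExp_sub (μ := P) (m := m) (hg n) hZ
    have hptwise : D ≤ᵐ[P] fun ω =>
        |(P[(fun ω => A ω * Z ω) - (fun ω => A ω * tr n (Z ω))|m]) ω| +
        |(P[(fun ω => tr n (Z ω)) - Z|m]) ω| := by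
      filter_upwards [htr n, hsub1, hsub2, hpibd] with ω h1 h2 h3 hp
      have : (P[fun ω => A ω * Z ω|m]) ω - pi ω * (P[Z|m]) ω =
          ((P[(fun ω => A ω * Z ω) - (fun ω => A ω * tr n (Z ω))|m]) ω) +
          pi ω * ((P[(fun ω => tr n (Z ω)) - Z|m]) ω) := by
        rw [h2, h3]
        simp only [Pi.sub_apply]
        rw [h1]
        ring
      rw [hD]
      simp only
      rw [this]
      have h4 : |pi ω * ((P[(fun ω => tr n (Z ω)) - Z|m]) ω)| ≤
          |(P[(fun ω => tr n (Z ω)) - Z|m]) ω| := by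
        rw [abs_mul]; exact mul_le_of_le_one_left (abs_nonneg _) hp
      exact (abs_add_le _ _).trans (by linarith)
    have hint2 : Integrable (fun ω =>
        |(P[(fun ω => A ω * Z ω) - (fun ω => A ω * tr n (Z ω))|m]) ω| +
        |(P[(fun ω => tr n (Z ω)) - Z|m]) ω|) P :=
      integrable_condExp.abs.add integrable_condExp.abs
    calc ∫ ω, D ω ∂P ≤ ∫ ω, (|(P[(fun ω => A ω * Z ω) - (fun ω => A ω * tr n (Z ω))|m]) ω| +
          |(P[(fun ω => tr n (Z ω)) - Z|m]) ω|) ∂P := integral_mono_ae hDint hint2 hptwise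
      _ = (∫ ω, |(P[(fun ω => A ω * Z ω) - (fun ω => A ω * tr n (Z ω))|m]) ω| ∂P) +
          ∫ ω, |(P[(fun ω => tr n (Z ω)) - Z|m]) ω| ∂P :=
        integral_add integrable_condExp.abs integrable_condExp.abs
      _ ≤ (∫ ω, |((fun ω => A ω * Z ω) - (fun ω => A ω * tr n (Z ω))) ω| ∂P) +
          ∫ ω, |((fun ω => tr n (Z ω)) - Z) ω| ∂P := by
        apply add_le_add
        · exact integral_abs_condExp_le _
        · exact integral_abs_condExp_le _
      _ ≤ ε n + ε n := by
        gcongr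
        · refine integral_mono_ae ((hAZ.sub (hAg n)).abs) (hεint n) ?_
          refine Eventually.of_forall fun ω => ?_
          simp only [Pi.sub_apply]
          rw [← mul_sub, abs_mul]
          exact mul_le_of_le_one_left (abs_nonneg _) (hAbd ω)
        · refine le_of_eq (integral_congr_ae (Eventually.of_forall fun ω => ?_))
          simp only [Pi.sub_apply]
          rw [abs_sub_comm]
      _ = 2 * ε n := by ring
  -- conclude ∫ D = 0
  have hD0 : ∫ ω, D ω ∂P = 0 := by
    have hle : ∫ ω, D ω ∂P ≤ 0 := by
      have : Tendsto (fun n => 2 * ε n) atTop (nhds 0) := by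
        simpa using hεto.const_mul 2
      exact ge_of_tendsto this (Eventually.of_forall hbound)
    have hge : 0 ≤ ∫ ω, D ω ∂P := integral_nonneg_of_ae hDnonneg
    linarith
  have := (integral_eq_zero_iff_of_nonneg_ae hDnonneg hDint).mp hD0
  filter_upwards [this] with ω hω
  have : D ω = 0 := hω
  rw [hD] at this
  simp only at this
  exact sub_eq_zero.mp (abs_eq_zero.mp this)

lemma aux {Ω : Type*} {m0 : MeasurableSpace Ω} (P : Measure Ω) [IsProbabilityMeasure P]
    (m : MeasurableSpace Ω)
    (A Y1 Y0 Y pi μ1 μ0 : Ω → ℝ)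
    (hA01 : ∀ ω, A ω = 0 ∨ A ω = 1) (hAmeas : Measurable[m0] A)
    (hY1 : MemLp Y1 2 P) (hY0 : MemLp Y0 2 P)
    (hY : Y = fun ω => A ω * Y1 ω + (1 - A ω) * Y0 ω)
    (hpi : pi =ᵐ[P] P[A|m])
    (δ : ℝ) (hδ : 0 < δ ∧ δ < 1/2)
    (hpos : ∀ᵐ ω ∂P, δ ≤ pi ω ∧ pi ω ≤ 1 - δ)
    (hμ1m : Measurable[m] μ1) (hμ0m : Measurable[m] μ0)
    (hμ1 : (fun ω => pi ω * μ1 ω) =ᵐ[P] P[fun ω => A ω * Y ω|m])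
    (hμ0 : (fun ω => (1 - pi ω) * μ0 ω) =ᵐ[P] P[fun ω => (1 - A ω) * Y ω|m])
    (hig : ∀ f : ℝ × ℝ → ℝ, Measurable f → (∃ C, ∀ x, |f x| ≤ C) →
      P[fun ω => A ω * f (Y0 ω, Y1 ω)|m] =ᵐ[P]
        fun ω => pi ω * (P[fun ω => f (Y0 ω, Y1 ω)|m]) ω) :
    μ1 =ᵐ[P] P[Y1|m] ∧ μ0 =ᵐ[P] P[Y0|m] := by
  by_cases hle : m ≤ m0
  swap
  · -- degenerate: conditional expectation is 0, contradicting positivity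
    exfalso
    haveI : (ae P).NeBot := ae_neBot.mpr (IsProbabilityMeasure.ne_zero P)
    have hpi0 : pi =ᵐ[P] (0 : Ω → ℝ) := by
      rw [condExp_of_not_le hle] at hpi; exact hpi
    have hFalse : ∀ᵐ ω ∂P, False := by
      filter_upwards [hpi0, hpos] with ω h0 ⟨h1, _⟩
      rw [Pi.zero_apply] at h0
      exact hδ.1.not_ge (h0 ▸ h1)
    obtain ⟨ω, hω⟩ := hFalse.exists
    exact hω
  have hAmeas' : Measurable[m0] A := hAmeas

  have hAbd : ∀ ω, |A ω| ≤ 1 := fun ω => by rcases hA01 ω with h | h <;> simp [h]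
  have hY1i : Integrable Y1 P := hY1.integrable one_le_two
  have hY0i : Integrable Y0 P := hY0.integrable one_le_two
  have hpibd : ∀ᵐ ω ∂P, |pi ω| ≤ 1 := by
    filter_upwards [hpos] with ω ⟨h1, h2⟩
    rw [abs_le]; constructor <;> nlinarith [hδ.1, hδ.2]
  have hpiae : AEStronglyMeasurable[m0] pi P :=
    (integrable_condExp (m := m) (f := A)).aestronglyMeasurable.congr hpi.symm
  -- key applications
  have key1 : P[fun ω => A ω * Y1 ω|m] =ᵐ[P] fun ω => pi ω * (P[Y1|m]) ω := by
    apply key m P A Y1 pi hAbd hAmeas' hY1i hpibd hpiae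
    intro n
    have := hig (fun p => tr n p.2) ((measurable_tr n).comp measurable_snd)
      ⟨n, fun x => tr_abs_le n x.2⟩
    exact this
  have key0 : P[fun ω => A ω * Y0 ω|m] =ᵐ[P] fun ω => pi ω * (P[Y0|m]) ω := by
    apply key m P A Y0 pi hAbd hAmeas' hY0i hpibd hpiae
    intro n
    have := hig (fun p => tr n p.1) ((measurable_tr n).comp measurable_fst)
      ⟨n, fun x => tr_abs_le n x.1⟩
    exact this
  -- A * Y = A * Y1, (1 - A) * Y = (1 - A) * Y0
  have hAY : (fun ω => A ω * Y ω) = fun ω => A ω * Y1 ω := by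
    funext ω; rw [hY]; rcases hA01 ω with h | h <;> simp [h]
  have hAY0 : (fun ω => (1 - A ω) * Y ω) = fun ω => (1 - A ω) * Y0 ω := by
    funext ω; rw [hY]; rcases hA01 ω with h | h <;> simp [h]
  constructor
  · -- μ1
    have h1 : (fun ω => pi ω * μ1 ω) =ᵐ[P] fun ω => pi ω * (P[Y1|m]) ω := by
      rw [hAY] at hμ1
      exact hμ1.trans key1
    filter_upwards [h1, hpos] with ω hω ⟨hp1, _⟩
    exact mul_left_cancel₀ ((lt_of_lt_of_le hδ.1 hp1).ne') hω
  · -- μ0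
    have hAY0i : Integrable (fun ω => A ω * Y0 ω) P :=
      hY0i.bdd_mul (hAmeas'.aestronglyMeasurable : AEStronglyMeasurable[m0] A P) (c := 1) (Eventually.of_forall fun ω => by simpa using hAbd ω)
    have hsub := condExp_sub (μ := P) (m := m) hY0i hAY0i
    have h2 : P[fun ω => (1 - A ω) * Y0 ω|m] =ᵐ[P] fun ω => (1 - pi ω) * (P[Y0|m]) ω := by
      have heq : (fun ω => (1 - A ω) * Y0 ω) = Y0 - fun ω => A ω * Y0 ω := by
        funext ω; simp [Pi.sub_apply]; ring
      rw [heq]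
      filter_upwards [hsub, key0] with ω hω h0
      simp only [Pi.sub_apply] at hω ⊢
      rw [hω, h0]
      ring
    have h1 : (fun ω => (1 - pi ω) * μ0 ω) =ᵐ[P] fun ω => (1 - pi ω) * (P[Y0|m]) ω := by
      rw [hAY0] at hμ0
      exact hμ0.trans h2
    filter_upwards [h1, hpos] with ω hω ⟨_, hp2⟩
    exact mul_left_cancel₀ (show (1:ℝ) - pi ω ≠ 0 from by have := hδ.1; intro h; linarith) hω

/-- Under strong ignorability and positivity, the outcome regressions coincide
almost surely with the conditional means of the potential outcomes. -/
theorem stmt_0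
    {Ω : Type*} {m : MeasurableSpace Ω} [MeasurableSpace Ω] (P : Measure Ω) [IsProbabilityMeasure P]
    (hm : m ≤ ‹MeasurableSpace Ω›)
    (A Y1 Y0 Y pi μ1 μ0 : Ω → ℝ)
    (hA01 : ∀ ω, A ω = 0 ∨ A ω = 1) (hAmeas : Measurable A)
    (hY1 : MemLp Y1 2 P) (hY0 : MemLp Y0 2 P)
    (hY : Y = fun ω => A ω * Y1 ω + (1 - A ω) * Y0 ω)
    (hpi : pi =ᵐ[P] P[A|m])
    (δ : ℝ) (hδ : 0 < δ ∧ δ < 1/2)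
    (hpos : ∀ᵐ ω ∂P, δ ≤ pi ω ∧ pi ω ≤ 1 - δ)
    (hμ1m : Measurable[m] μ1) (hμ0m : Measurable[m] μ0)
    (hμ1 : (fun ω => pi ω * μ1 ω) =ᵐ[P] P[fun ω => A ω * Y ω|m])
    (hμ0 : (fun ω => (1 - pi ω) * μ0 ω) =ᵐ[P] P[fun ω => (1 - A ω) * Y ω|m])
    (hig : ∀ f : ℝ × ℝ → ℝ, Measurable f → (∃ C, ∀ x, |f x| ≤ C) →
      P[fun ω => A ω * f (Y0 ω, Y1 ω)|m] =ᵐ[P]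
        fun ω => pi ω * (P[fun ω => f (Y0 ω, Y1 ω)|m]) ω) :
    μ1 =ᵐ[P] P[Y1|m] ∧ μ0 =ᵐ[P] P[Y0|m] := by
  exact aux P m A Y1 Y0 Y pi μ1 μ0 hA01 hAmeas hY1 hY0 hY hpi δ hδ hpos hμ1m hμ0m hμ1 hμ0 hig
end

section
/- (Square-integrability of the efficient influence function, part of Proposition 1.) Under positivity and square-integrability of Y¹ and Y⁰, the efficient influence function ψ̇ = (A − π)·(Y − μ⁰) / (E[A]·(1 − π)) − A·ψ_patt / E[A] belongs to L²(P), i.e., E[ψ̇²] < ∞. -/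
open MeasureTheory ProbabilityTheory Filter

/-- Conditional expectation of an L² function is in L². -/
lemma aux_memL2_condexp {Ω : Type*} {m m0 : MeasurableSpace Ω} (P : Measure Ω)
    [IsProbabilityMeasure P] {f : Ω → ℝ} (hf : MemLp f 2 P) :
    MemLp (P[f|m]) 2 P := by
  by_cases hle : m ≤ m0
  · haveI : SigmaFinite (P.trim hle) := inferInstance
    have hcoe : (condExpL2 ℝ ℝ hle (hf.toLp f) : Ω → ℝ) =ᵐ[P] P[f|m] := by
      refine ae_eq_condExp_of_forall_setIntegral_eq hle (hf.integrable one_le_two)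
        (fun s _ hμs => integrableOn_condExpL2_of_measure_ne_top hle hμs.ne _)
        (fun s hs hμs => ?_) (aestronglyMeasurable_condExpL2 hle _)
      rw [integral_condExpL2_eq hle (hf.toLp f) hs hμs.ne]
      exact setIntegral_congr_ae (hle s hs) ((hf.coeFn_toLp).mono fun x hx _ => hx)
    exact (Lp.memLp _).ae_eq hcoe
  · rw [condExp_of_not_le hle]
    exact MemLp.zero

/-- Square-integrability of the efficient influence function. -/
theorem stmt_3
    {Ω : Type*} {m : MeasurableSpace Ω} [MeasurableSpace Ω] (P : Measure Ω) [IsProbabilityMeasure P]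
    (hm : m ≤ ‹MeasurableSpace Ω›)
    (A Y1 Y0 Y pi μ1 μ0 : Ω → ℝ)
    (hA01 : ∀ ω, A ω = 0 ∨ A ω = 1) (hAmeas : Measurable A)
    (hY1 : MemLp Y1 2 P) (hY0 : MemLp Y0 2 P)
    (hY : Y = fun ω => A ω * Y1 ω + (1 - A ω) * Y0 ω)
    (hpi : pi =ᵐ[P] P[A|m])
    (δ : ℝ) (hδ : 0 < δ ∧ δ < 1/2)
    (hpos : ∀ᵐ ω ∂P, δ ≤ pi ω ∧ pi ω ≤ 1 - δ)
    (hμ1m : Measurable[m] μ1) (hμ0m : Measurable[m] μ0)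
    (hμ1 : (fun ω => pi ω * μ1 ω) =ᵐ[P] P[fun ω => A ω * Y ω|m])
    (hμ0 : (fun ω => (1 - pi ω) * μ0 ω) =ᵐ[P] P[fun ω => (1 - A ω) * Y ω|m])
    (ψpatt : ℝ) (hψpatt : ψpatt = (∫ ω, A ω * (Y1 ω - Y0 ω) ∂P) / ∫ ω, A ω ∂P)
    (ψdot : Ω → ℝ)
    (hψdot : ψdot = fun ω => (A ω - pi ω) * (Y ω - μ0 ω) /
      ((∫ ω, A ω ∂P) * (1 - pi ω)) - A ω * ψpatt / ∫ ω, A ω ∂P) :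
    MemLp ψdot 2 P := by
  rename_i m0 _iP
  obtain ⟨hδ0, hδhalf⟩ := hδ
  by_cases hle : m ≤ m0
  swap
  · exfalso
    have h0 : P[A|m] = 0 := condExp_of_not_le hle
    obtain ⟨ω, hω1, hω2, _⟩ := (hpi.and hpos).exists
    rw [h0] at hω1
    simp only [Pi.zero_apply] at hω1
    have hle0 : δ ≤ 0 := hω1 ▸ hω2
    exact absurd hle0 (not_le.mpr hδ0)
  -- measurability facts
  have hAae : AEStronglyMeasurable[m0] A P := hAmeas.aestronglyMeasurable
  have hpiae : AEStronglyMeasurable[m0] pi P :=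
    ((stronglyMeasurable_condExp.mono hle).aestronglyMeasurable).congr hpi.symm
  have hYae : AEStronglyMeasurable[m0] Y P := by
    rw [hY]
    exact (hAae.mul hY1.1).add ((aestronglyMeasurable_const.sub hAae).mul hY0.1)
  -- Y ∈ L²
  have hYL2 : MemLp Y 2 P := by
    refine MemLp.of_le (hY1.norm.add hY0.norm) hYae ?_
    filter_upwards with ω
    have hYcase : |Y ω| ≤ |Y1 ω| + |Y0 ω| := by
      rcases hA01 ω with h | h
      · have hv : Y ω = Y0 ω := by rw [hY]; simp [h]
        rw [hv]; linarith [abs_nonneg (Y1 ω)]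
      · have hv : Y ω = Y1 ω := by rw [hY]; simp [h]
        rw [hv]; linarith [abs_nonneg (Y0 ω)]
    have hfa : ((fun x => ‖Y1 x‖) + fun x => ‖Y0 x‖) ω = ‖Y1 ω‖ + ‖Y0 ω‖ := rfl
    have hrhs : ‖((fun x => ‖Y1 x‖) + fun x => ‖Y0 x‖) ω‖ = |Y1 ω| + |Y0 ω| := by
      rw [hfa]
      simp only [Real.norm_eq_abs, abs_abs]
      exact abs_of_nonneg (by positivity)
    rw [hrhs, Real.norm_eq_abs]
    exact hYcase
  -- (1-A)Y ∈ L²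
  have hg : MemLp (fun ω => (1 - A ω) * Y ω) 2 P := by
    refine MemLp.of_le hYL2 ((aestronglyMeasurable_const.sub hAae).mul hYae) ?_
    filter_upwards with ω
    rcases hA01 ω with h | h <;> simp [h, Real.norm_eq_abs, abs_nonneg]
  have hgc : MemLp (P[fun ω => (1 - A ω) * Y ω|m]) 2 P := aux_memL2_condexp (m := m) P hg
  have hgcae : AEStronglyMeasurable[m0] (P[fun ω => (1 - A ω) * Y ω|m]) P :=
    (stronglyMeasurable_condExp.mono hle).aestronglyMeasurable
  -- μ0 ∈ L²
  have hμ0rep : μ0 =ᵐ[P] fun x => (P[fun ω => (1 - A ω) * Y ω|m]) x / (1 - pi x) := by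
    filter_upwards [hμ0, hpos] with ω h1 h2
    have hne : (1 : ℝ) - pi ω ≠ 0 := by linarith [h2.2]
    rw [← h1, mul_comm, mul_div_assoc]
    rw [div_self hne, mul_one]
  have hμ0ae : AEStronglyMeasurable[m0] μ0 P := by
    have : AEMeasurable (fun x => (P[fun ω => (1 - A ω) * Y ω|m]) x / (1 - pi x)) P :=
      hgcae.aemeasurable.div (aemeasurable_const.sub hpiae.aemeasurable)
    exact this.aestronglyMeasurable.congr hμ0rep.symm
  have hμ0L2 : MemLp μ0 2 P := by
    refine MemLp.of_le (hgc.const_mul δ⁻¹) hμ0ae ?_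
    filter_upwards [hμ0rep, hpos] with ω h1 h2
    rw [h1, Real.norm_eq_abs, Real.norm_eq_abs, abs_div,
      abs_of_pos (show (0:ℝ) < 1 - pi ω by linarith [h2.2]), abs_mul,
      abs_of_pos (show (0:ℝ) < δ⁻¹ by positivity), div_eq_inv_mul]
    have := abs_nonneg ((P[fun ω => (1 - A ω) * Y ω|m]) ω)
    have h3 : (1 - pi ω)⁻¹ ≤ δ⁻¹ := by
      apply inv_anti₀ hδ0; linarith [h2.2]
    nlinarith [inv_nonneg.mpr (le_of_lt hδ0)]
  -- the main bound
  set c : ℝ := ∫ ω, A ω ∂P with hc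
  by_cases hc0 : c = 0
  · have hz : ψdot = fun _ => (0 : ℝ) := by
      funext ω; simp [hψdot, hc0]
    rw [hz]
    exact memLp_const 0
  · have hcpos : 0 < |c| := abs_pos.mpr hc0
    have hF : MemLp (fun ω => (|c| * δ)⁻¹ * ‖Y ω - μ0 ω‖ + |ψpatt| / |c|) 2 P := by
      exact ((hYL2.sub hμ0L2).norm.const_mul ((|c| * δ)⁻¹)).add (memLp_const _)
    have hψae : AEStronglyMeasurable[m0] ψdot P := by
      rw [hψdot]
      have : AEMeasurable (fun ω => (A ω - pi ω) * (Y ω - μ0 ω) / (c * (1 - pi ω))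
          - A ω * ψpatt / c) P :=
        (((hAae.aemeasurable.sub hpiae.aemeasurable).mul
          (hYae.aemeasurable.sub hμ0ae.aemeasurable)).div
          (aemeasurable_const.mul (aemeasurable_const.sub hpiae.aemeasurable))).sub
          ((hAae.aemeasurable.mul aemeasurable_const).div aemeasurable_const)
      exact this.aestronglyMeasurable
    refine MemLp.of_le hF hψae ?_
    filter_upwards [hpos] with ω h2
    obtain ⟨hp1, hp2⟩ := h2
    have hApi : |A ω - pi ω| ≤ 1 := by
      rw [abs_le]; rcases hA01 ω with h | h <;> rw [h] <;> constructor <;> linarith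
    have hA1 : |A ω| ≤ 1 := by
      rcases hA01 ω with h | h <;> simp [h]
    have habs1 : |(A ω - pi ω) * (Y ω - μ0 ω) / (c * (1 - pi ω))| ≤
        |Y ω - μ0 ω| / (|c| * δ) := by
      rw [abs_div, abs_mul, abs_mul, abs_of_pos (show (0:ℝ) < 1 - pi ω by linarith)]
      refine div_le_div₀ (abs_nonneg _) ?_ (mul_pos hcpos hδ0) ?_
      · nlinarith [abs_nonneg (Y ω - μ0 ω)]
      · exact mul_le_mul_of_nonneg_left (by linarith) (abs_nonneg c)
    have habs2 : |A ω * ψpatt / c| ≤ |ψpatt| / |c| := by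
      rw [abs_div, abs_mul]
      refine div_le_div₀ (abs_nonneg _) ?_ hcpos le_rfl
      nlinarith [abs_nonneg ψpatt]
    have htri : |((A ω - pi ω) * (Y ω - μ0 ω) / (c * (1 - pi ω))) - A ω * ψpatt / c| ≤
        |(A ω - pi ω) * (Y ω - μ0 ω) / (c * (1 - pi ω))| + |A ω * ψpatt / c| :=
      abs_sub _ _
    rw [hψdot]
    simp only [Real.norm_eq_abs]
    rw [abs_of_nonneg (show (0:ℝ) ≤ (|c| * δ)⁻¹ * |Y ω - μ0 ω| + |ψpatt| / |c| by positivity)]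
    have heq : (|c| * δ)⁻¹ * |Y ω - μ0 ω| = |Y ω - μ0 ω| / (|c| * δ) := by
      rw [div_eq_inv_mul]
    rw [heq]
    linarith
end

section
/- (Proposition 7, sharpness.) For every p, q ∈ [0,1] there exist a probability space and random variables U, V taking values in {0,1} with E[U] = p, E[V] = q, and Var(U − V) = |p − q| − (p − q)²; that is, the bound Var(U − V) ≥ |p − q| − (p − q)² is sharp. -/
/-!
Take ω uniform on the unit interval and the monotone coupling U = 1{ω < p}, V = 1{ω < q}.
Then (U - V)² is the indicator of the interval between p and q, so E[(U - V)²] = |p - q|,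
while E[U - V] = p - q.
-/

open MeasureTheory Set unitInterval
open scoped symmDiff

theorem Set.indicator_one_sub_indicator_one_sq {α R : Type*} [Ring R] (s t : Set α) (x : α) :
    (s.indicator (1 : α → R) x - t.indicator 1 x) ^ 2 = (s ∆ t).indicator 1 x := by
  by_cases hs : x ∈ s <;> by_cases ht : x ∈ t <;> simp [mem_symmDiff, *]

section

variable {α : Type*} [MeasurableSpace α] {μ : Measure α} {s t : Set α}

theorem MeasureTheory.integral_indicator_one_sub_indicator_one_sq (hs : MeasurableSet s)
    (ht : MeasurableSet t) :
    ∫ x, (s.indicator (1 : α → ℝ) x - t.indicator 1 x) ^ 2 ∂μ = μ.real (s ∆ t) := by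
  simp_rw [Set.indicator_one_sub_indicator_one_sq]
  exact integral_indicator_one (hs.symmDiff ht)

theorem MeasureTheory.measureReal_symmDiff_of_subset (hst : s ⊆ t) (hs : MeasurableSet s)
    (ht : μ t ≠ ⊤ := by finiteness) :
    μ.real (s ∆ t) = μ.real t - μ.real s := by
  rw [symmDiff_of_le hst, measureReal_sdiff hst hs ht]

end

theorem unitInterval.measureReal_Iio (x : I) : volume.real (Iio x) = x := by
  simp [Measure.real, x.2.1]

theorem unitInterval.measureReal_Iio_symmDiff_Iio (x y : I) :
    volume.real (Iio x ∆ Iio y) = |(x : ℝ) - y| := by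
  rcases le_total x y with hxy | hyx
  · rw [measureReal_symmDiff_of_subset (Iio_subset_Iio hxy) measurableSet_Iio, measureReal_Iio,
      measureReal_Iio, abs_sub_comm, abs_of_nonneg (sub_nonneg.2 (Subtype.coe_le_coe.2 hxy))]
  · rw [symmDiff_comm, measureReal_symmDiff_of_subset (Iio_subset_Iio hyx) measurableSet_Iio,
      measureReal_Iio, measureReal_Iio, abs_of_nonneg (sub_nonneg.2 (Subtype.coe_le_coe.2 hyx))]

/-- Proposition 7, sharpness of the binary-outcome variance lower bound. -/
theorem stmt_15 (p q : ℝ) (hp : p ∈ Set.Icc (0 : ℝ) 1) (hq : q ∈ Set.Icc (0 : ℝ) 1) :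
    ∃ (Ω : Type) (_ : MeasurableSpace Ω) (P : MeasureTheory.Measure Ω)
      (_ : MeasureTheory.IsProbabilityMeasure P) (U V : Ω → ℝ),
      Measurable U ∧ Measurable V ∧
      (∀ ω, U ω = 0 ∨ U ω = 1) ∧ (∀ ω, V ω = 0 ∨ V ω = 1) ∧
      (∫ ω, U ω ∂P) = p ∧ (∫ ω, V ω ∂P) = q ∧
      (∫ ω, (U ω - V ω) ^ 2 ∂P) - (∫ ω, (U ω - V ω) ∂P) ^ 2 =
        |p - q| - (p - q) ^ 2 := by
  set x : I := ⟨p, hp⟩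
  set y : I := ⟨q, hq⟩
  have hU : ∫ ω, (Iio x).indicator (1 : I → ℝ) ω = p :=
    (integral_indicator_one measurableSet_Iio).trans (measureReal_Iio x)
  have hV : ∫ ω, (Iio y).indicator (1 : I → ℝ) ω = q :=
    (integral_indicator_one measurableSet_Iio).trans (measureReal_Iio y)
  refine ⟨I, inferInstance, volume, inferInstance, (Iio x).indicator 1, (Iio y).indicator 1,
    measurable_const.indicator measurableSet_Iio, measurable_const.indicator measurableSet_Iio,
    fun ω ↦ indicator_eq_zero_or_self _ _ _, fun ω ↦ indicator_eq_zero_or_self _ _ _, hU, hV, ?_⟩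
  rw [integral_indicator_one_sub_indicator_one_sq measurableSet_Iio measurableSet_Iio,
    measureReal_Iio_symmDiff_Iio, integral_sub ((integrable_const 1).indicator measurableSet_Iio)
      ((integrable_const 1).indicator measurableSet_Iio), hU, hV]
end
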